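/- Suppose S contains a point x₀ > 0 (so that P_Y(k) > 0 for all k ∈ ℕ), and let G(x) = Σ_{k∈ℕ} P_{Y|X}(k|x) · log( 1/(k!·P_Y(k)) ) for x > 0. Then for every x > 0, G is differentiable at x with derivative G′(x) = Σ_{k∈ℕ} P_{Y|X}(k|x) · log( P_Y(k) / ((k+1)·P_Y(k+1)) ), i.e., G′(x) = Σ_{k∈ℕ} P_{Y|X}(k|x) · log(1/m(k)) where m(k) = (k+1)P_Y(k+1)/P_Y(k) is the posterior mean of the input given output k. -/

import Mathlib

open Real

/-- Poisson channel pmf: `P_{Y|X}(y|x) = x^y e^{-x} / y!` (with `0^0 = 1`, `0! = 1`). -/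
noncomputable def poissonPMF (x : ℝ) (y : ℕ) : ℝ := x ^ y * Real.exp (-x) / (Nat.factorial y)

/-- Output pmf induced by a finitely supported input: `P_Y(k) = Σ_{x ∈ S} p(x) x^k e^{-x}/k!`. -/
noncomputable def outPMF (S : Finset ℝ) (p : ℝ → ℝ) (k : ℕ) : ℝ :=
  ∑ x ∈ S, p x * poissonPMF x k

/-- `G(x) = Σ_k P_{Y|X}(k|x) log (1/(k! P_Y(k)))`. -/
noncomputable def Gfun (S : Finset ℝ) (p : ℝ → ℝ) (x : ℝ) : ℝ :=
  ∑' k : ℕ, poissonPMF x k * Real.log (1 / ((Nat.factorial k : ℝ) * outPMF S p k))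

/-! Put `c k = log (1 / (k! P_Y(k)))`, so that `G(x) = e^{-x} ∑ c k x^k / k!`. The bounds
`p(x₀) e^{-x₀} x₀^k ≤ k! P_Y(k) ≤ (∑ p) A^k` make `c` grow at most linearly, so the exponential
generating function of `c` is entire and can be differentiated term by term, its derivative being
the generating function of `k ↦ c (k + 1)`. Hence `G'(x) = ∑ P_{Y|X}(k|x) (c (k + 1) - c k)`, and
`c (k + 1) - c k = log (P_Y(k) / ((k + 1) P_Y(k + 1)))`. -/

open scoped Nat

section ExpGeneratingFunction

variable {c : ℕ → ℝ} {M R : ℝ}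

theorem summable_pow_div_factorial_mul (hc : ∀ k, |c k| ≤ M * R ^ k) (x : ℝ) :
    Summable fun k => x ^ k / k ! * c k := by
  refine .of_norm_bounded ((Real.summable_pow_div_factorial (|x| * R)).mul_left M) fun k => ?_
  rw [Real.norm_eq_abs, abs_mul, abs_div, abs_pow, Nat.abs_cast, mul_pow]
  calc |x| ^ k / k ! * |c k| ≤ |x| ^ k / k ! * (M * R ^ k) := by gcongr; exact hc k
    _ = M * (|x| ^ k * R ^ k / k !) := by ring

theorem hasDerivAt_pow_succ_div_factorial (k : ℕ) (x : ℝ) :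
    HasDerivAt (fun y : ℝ => y ^ (k + 1) / (k + 1)!) (x ^ k / k !) x := by
  refine ((hasDerivAt_pow (k + 1) x).div_const _).congr_deriv ?_
  rw [Nat.factorial_succ]
  push_cast
  field_simp

theorem hasDerivAt_tsum_pow_div_factorial_mul (hc : ∀ k, |c k| ≤ M * R ^ k) (x : ℝ) :
    HasDerivAt (fun y => ∑' k, y ^ k / k ! * c k) (∑' k, x ^ k / k ! * c (k + 1)) x := by
  have hc' : ∀ k, |c (k + 1)| ≤ M * R * R ^ k := fun k => by rw [mul_assoc, ← pow_succ']; exact hc _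
  set B := |x| + 1
  have hshift : (fun y => ∑' k, y ^ k / k ! * c k)
      = fun y => c 0 + ∑' k, y ^ (k + 1) / (k + 1)! * c (k + 1) := by
    funext y
    rw [(summable_pow_div_factorial_mul hc y).tsum_eq_zero_add]
    simp
  rw [hshift]
  -- after splitting off `c 0`, the termwise derivatives `y ^ k / k ! * c (k + 1)` are bounded on
  -- `(-B, B)` by a summable sequence
  have hx : x ∈ Set.Ioo (-B) B := abs_lt.mp (lt_add_one |x|)
  refine (hasDerivAt_tsum_of_isPreconnected
    ((Real.summable_pow_div_factorial (B * R)).mul_left (M * R)) isOpen_Ioo isPreconnected_Ioo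
    (fun k y _ => (hasDerivAt_pow_succ_div_factorial k y).mul_const (c (k + 1)))
    (fun k y hy => ?_) hx ?_ hx).const_add (c 0)
  · rw [Real.norm_eq_abs, abs_mul, abs_div, abs_pow, Nat.abs_cast, mul_pow]
    have hyB : |y| ^ k ≤ B ^ k := pow_le_pow_left₀ (abs_nonneg y) (abs_lt.mpr hy).le k
    calc |y| ^ k / k ! * |c (k + 1)| ≤ B ^ k / k ! * (M * R * R ^ k) := by
          gcongr
          exact hc' k
      _ = M * R * (B ^ k * R ^ k / k !) := by ring
  · exact (summable_nat_add_iff 1).mpr (summable_pow_div_factorial_mul hc x)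

end ExpGeneratingFunction

theorem factorial_mul_poissonPMF (x : ℝ) (k : ℕ) : k ! * poissonPMF x k = x ^ k * exp (-x) := by
  rw [poissonPMF]; field_simp

theorem poissonPMF_nonneg {x : ℝ} (hx : 0 ≤ x) (k : ℕ) : 0 ≤ poissonPMF x k := by
  rw [poissonPMF]; positivity

theorem poissonPMF_pos {x : ℝ} (hx : 0 < x) (k : ℕ) : 0 < poissonPMF x k := by
  rw [poissonPMF]; positivity

theorem poissonPMF_eq_exp_mul (x : ℝ) (k : ℕ) : poissonPMF x k = exp (-x) * (x ^ k / k !) := by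
  rw [poissonPMF]; ring

theorem hasDerivAt_tsum_poissonPMF_mul {c : ℕ → ℝ} {M R : ℝ} (hc : ∀ k, |c k| ≤ M * R ^ k)
    (x : ℝ) :
    HasDerivAt (fun y => ∑' k, poissonPMF y k * c k)
      (∑' k, poissonPMF x k * (c (k + 1) - c k)) x := by
  have hc' : ∀ k, |c (k + 1)| ≤ M * R * R ^ k := fun k => by rw [mul_assoc, ← pow_succ']; exact hc _
  have hexp : HasDerivAt (fun y => exp (-y)) (-exp (-x)) x := by
    simpa using (hasDerivAt_neg x).exp
  simp only [poissonPMF_eq_exp_mul, mul_assoc, tsum_mul_left]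
  refine (hexp.mul (hasDerivAt_tsum_pow_div_factorial_mul hc x)).congr_deriv ?_
  simp only [mul_sub]
  rw [(summable_pow_div_factorial_mul hc' x).tsum_sub (summable_pow_div_factorial_mul hc x)]
  ring

theorem exists_abs_log_le_mul_pow {t : ℕ → ℝ} {a b s d : ℝ} (ha : 0 < a) (hb : 0 < b)
    (hs : 0 < s) (hd : 0 < d) (hlow : ∀ k, a * b ^ k ≤ t k) (hup : ∀ k, t k ≤ s * d ^ k) :
    ∃ M R, ∀ k, |log (t k)| ≤ M * R ^ k := by
  set C := |log a| + |log s|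
  set D := |log b| + |log d|
  refine ⟨C + D, 2, fun k => ?_⟩
  have hlog : ∀ {u v : ℝ}, 0 < u → 0 < v → |log (u * v ^ k)| ≤ |log u| + k * |log v| := by
    intro u v hu hv
    rw [log_mul hu.ne' (pow_pos hv k).ne', log_pow]
    exact (abs_add_le _ _).trans_eq (by rw [abs_mul, Nat.abs_cast])
  have htk : 0 < t k := (mul_pos ha (pow_pos hb k)).trans_le (hlow k)
  calc |log (t k)|
      ≤ max |log (a * b ^ k)| |log (s * d ^ k)| :=
        abs_le_max_abs_abs (log_le_log (by positivity) (hlow k)) (log_le_log htk (hup k))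
    _ ≤ |log (a * b ^ k)| + |log (s * d ^ k)| := max_le_add_of_nonneg (abs_nonneg _) (abs_nonneg _)
    _ ≤ C + D * k := by linarith [hlog ha hb, hlog hs hd]
    _ ≤ (C + D) * 2 ^ k := by
      have hk : (k : ℝ) ≤ 2 ^ k := by exact_mod_cast Nat.lt_two_pow_self.le
      have h1 : (1 : ℝ) ≤ 2 ^ k := one_le_pow₀ one_le_two
      have : 0 ≤ C := by positivity
      have : 0 ≤ D := by positivity
      nlinarith

theorem log_one_div_factorial_mul_succ_sub {P : ℕ → ℝ} {k : ℕ} (hk : 0 < P k)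
    (hk' : 0 < P (k + 1)) :
    log (1 / ((k + 1)! * P (k + 1))) - log (1 / (k ! * P k)) =
      log (P k / ((k + 1) * P (k + 1))) := by
  rw [← log_div (by positivity) (by positivity), Nat.factorial_succ]
  congr 1
  push_cast
  field_simp

section OutputPMF

variable {S : Finset ℝ} {p : ℝ → ℝ}

theorem mul_poissonPMF_le_outPMF (hS : ∀ y ∈ S, 0 ≤ y) (hp : ∀ y ∈ S, 0 ≤ p y) {x₀ : ℝ}
    (hx₀ : x₀ ∈ S) (k : ℕ) : p x₀ * poissonPMF x₀ k ≤ outPMF S p k :=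
  Finset.single_le_sum (f := fun y => p y * poissonPMF y k)
    (fun y hy => mul_nonneg (hp y hy) (poissonPMF_nonneg (hS y hy) k)) hx₀

theorem outPMF_pos (hS : ∀ y ∈ S, 0 ≤ y) (hp : ∀ y ∈ S, 0 < p y) {x₀ : ℝ} (hx₀ : x₀ ∈ S)
    (hx₀pos : 0 < x₀) (k : ℕ) : 0 < outPMF S p k :=
  (mul_pos (hp x₀ hx₀) (poissonPMF_pos hx₀pos k)).trans_le
    (mul_poissonPMF_le_outPMF hS (fun y hy => (hp y hy).le) hx₀ k)

theorem factorial_mul_outPMF_le {A : ℝ} (hS : (S : Set ℝ) ⊆ Set.Icc 0 A)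
    (hp : ∀ y ∈ S, 0 ≤ p y) (k : ℕ) : k ! * outPMF S p k ≤ (∑ y ∈ S, p y) * A ^ k := by
  rw [outPMF, Finset.mul_sum, Finset.sum_mul]
  refine Finset.sum_le_sum fun y hy => ?_
  obtain ⟨hy0, hyA⟩ := hS hy
  rw [mul_left_comm, factorial_mul_poissonPMF]
  gcongr
  · exact hp y hy
  · calc y ^ k * exp (-y) ≤ y ^ k :=
          mul_le_of_le_one_right (by positivity) (exp_le_one_iff.mpr (by linarith))
      _ ≤ A ^ k := pow_le_pow_left₀ hy0 hyA k

end OutputPMF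

theorem Gfun_hasDerivAt_general
    (A : ℝ) (hA : 0 < A) (S : Finset ℝ) (hS : (S : Set ℝ) ⊆ Set.Icc 0 A)
    (p : ℝ → ℝ) (hp : ∀ x ∈ S, 0 < p x)
    (x₀ : ℝ) (hx₀S : x₀ ∈ S) (hx₀pos : 0 < x₀) :
    ∀ x : ℝ, 0 < x →
      HasDerivAt (Gfun S p)
        (∑' k : ℕ, poissonPMF x k *
          Real.log (outPMF S p k / (((k : ℝ) + 1) * outPMF S p (k + 1)))) x := by
  intro x _
  have hS0 : ∀ y ∈ S, 0 ≤ y := fun y hy => (hS hy).1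
  have hp0 : ∀ y ∈ S, 0 ≤ p y := fun y hy => (hp y hy).le
  have hP := outPMF_pos hS0 hp hx₀S hx₀pos
  obtain ⟨M, R, hc⟩ : ∃ M R, ∀ k : ℕ, |log (1 / (k ! * outPMF S p k))| ≤ M * R ^ k := by
    simp only [one_div, log_inv, abs_neg]
    refine exists_abs_log_le_mul_pow (mul_pos (hp x₀ hx₀S) (exp_pos (-x₀))) hx₀pos
      (Finset.sum_pos hp ⟨x₀, hx₀S⟩) hA (fun k => ?_) (factorial_mul_outPMF_le hS hp0)
    calc p x₀ * exp (-x₀) * x₀ ^ k = k ! * (p x₀ * poissonPMF x₀ k) := by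
          rw [mul_left_comm, factorial_mul_poissonPMF]; ring
      _ ≤ k ! * outPMF S p k := by gcongr; exact mul_poissonPMF_le_outPMF hS0 hp0 hx₀S k
  exact (hasDerivAt_tsum_poissonPMF_mul hc x).congr_deriv
    (tsum_congr fun k => by rw [log_one_div_factorial_mul_succ_sub (hP k) (hP (k + 1))])

/-- `G` is differentiable at every `x > 0` with
`G'(x) = Σ_k P_{Y|X}(k|x) log (P_Y(k) / ((k+1) P_Y(k+1)))`, i.e. the derivative equals
`Σ_k P_{Y|X}(k|x) log (1/m(k))` where `m(k) = (k+1)P_Y(k+1)/P_Y(k)` is the posterior mean. -/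
theorem Gfun_hasDerivAt
    (A : ℝ) (hA : 0 < A) (S : Finset ℝ) (hS : (S : Set ℝ) ⊆ Set.Icc 0 A)
    (p : ℝ → ℝ) (hp : ∀ x ∈ S, 0 < p x) (hpsum : ∑ x ∈ S, p x = 1)
    (x₀ : ℝ) (hx₀S : x₀ ∈ S) (hx₀pos : 0 < x₀) :
    ∀ x : ℝ, 0 < x →
      HasDerivAt (Gfun S p)
        (∑' k : ℕ, poissonPMF x k *
          Real.log (outPMF S p k / (((k : ℝ) + 1) * outPMF S p (k + 1)))) x :=
  Gfun_hasDerivAt_general A hA S hS p hp x₀ hx₀S hx₀pos
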